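/- Let $\mu$ be positive and finite on dyadic intervals, $\alpha \geq 0$, and define $\|f\|_{\Lambda_2(\alpha)} = \sup_{J\in\mathcal{D}} \mu(J)^{-1/2-\alpha}\left(\int_J |f - \langle f\rangle_{\widehat{J}}|^2\, d\mu\right)^{1/2}$. Then for any dyadic interval $I$, $\|h_I\|_{\Lambda_2(\alpha)}$ is comparable (with absolute constants) to $m(I)^{-\alpha - 1/2}$, where $m(I)=\min\{\mu(I_-),\mu(I_+)\}$ and $h_I$ is the $\mu$-adapted Haar function. -/

import Mathlib

open MeasureTheory Set

noncomputable section

/-- The dyadic interval `[l·2^{-k}, (l+1)·2^{-k})`. -/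
def dyadicI (k l : ℤ) : Set ℝ :=
  Set.Ico ((l : ℝ) * (2 : ℝ) ^ (-k)) (((l : ℝ) + 1) * (2 : ℝ) ^ (-k))

/-- A dyadic interval indexed by a pair `(generation, position)`. -/
def dI (p : ℤ × ℤ) : Set ℝ := dyadicI p.1 p.2

/-- Left child. -/
def leftCh (p : ℤ × ℤ) : ℤ × ℤ := (p.1 + 1, 2 * p.2)

/-- Right child. -/
def rightCh (p : ℤ × ℤ) : ℤ × ℤ := (p.1 + 1, 2 * p.2 + 1)

/-- Dyadic parent. -/
def par (p : ℤ × ℤ) : ℤ × ℤ := (p.1 - 1, Int.fdiv p.2 2)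

/-- `t`-th dyadic ancestor. -/
def anc (t : ℕ) (p : ℤ × ℤ) : ℤ × ℤ := par^[t] p

/-- The measure `μ` is positive and finite on all dyadic intervals. -/
def posFin (μ : Measure ℝ) : Prop := ∀ p : ℤ × ℤ, 0 < μ (dI p) ∧ μ (dI p) < ⊤

/-- The `μ`-average of `f` over a set `S`. -/
def avg (μ : Measure ℝ) (f : ℝ → ℝ) (S : Set ℝ) : ℝ :=
  (∫ x in S, f x ∂μ) / (μ S).toReal

/-- The `μ`-adapted Haar function of the dyadic interval indexed by `p`. -/
def haar (μ : Measure ℝ) (p : ℤ × ℤ) : ℝ → ℝ := fun x =>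
  Real.sqrt ((μ (dI (leftCh p))).toReal * (μ (dI (rightCh p))).toReal / (μ (dI p)).toReal) *
    ((dI (leftCh p)).indicator (fun _ => ((μ (dI (leftCh p))).toReal)⁻¹) x -
      (dI (rightCh p)).indicator (fun _ => ((μ (dI (rightCh p))).toReal)⁻¹) x)

/-- `m(I) = min(μ(I₋), μ(I₊))`. -/
def mval (μ : Measure ℝ) (p : ℤ × ℤ) : ℝ :=
  min (μ (dI (leftCh p))).toReal (μ (dI (rightCh p))).toReal

/-- The martingale Lipschitz `Λ₂(α)` norm (as an extended real):
`sup_J μ(J)^{-1/2-α} (∫_J |f - ⟨f⟩_{Ĵ}|² dμ)^{1/2}`. -/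
def lipNorm (μ : Measure ℝ) (α : ℝ) (f : ℝ → ℝ) : ENNReal :=
  ⨆ p : ℤ × ℤ, ENNReal.ofReal (((μ (dI p)).toReal) ^ (-(1/2 : ℝ) - α) *
    Real.sqrt (∫ x in dI p, (f x - avg μ f (dI (par p))) ^ 2 ∂μ))

/-!
The normalized oscillation of `h_I` on a dyadic interval `J` vanishes unless `J ⊇ I` or `J` is a
child of `I`: off `I` the function `h_I` is zero and has mean zero over every dyadic interval
containing or avoiding `I`, and on each child of `I` it is constant, so it is constant on `Ĵ`
whenever `J` lies strictly inside a child. For `J ⊇ I` the oscillation is `μ(J)^{-1/2-α}`, since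
`h_I` has mean zero and unit `L²` norm; for `J = I_±` it is `μ(I_±)^{-1/2-α} (μ(I_∓)/μ(I))^{1/2}`.
All of these are at most `m(I)^{-1/2-α}`, and the lighter child gives at least
`2^{-1/2} m(I)^{-1/2-α}`, so `c = √2` works.
-/

lemma measurableSet_dI (q : ℤ × ℤ) : MeasurableSet (dI q) := measurableSet_Ico

lemma dI_nonempty (q : ℤ × ℤ) : (dI q).Nonempty :=
  nonempty_Ico.2 <| mul_lt_mul_of_pos_right (lt_add_one _) (zpow_pos two_pos _)

lemma disjoint_dyadicI {k l l' : ℤ} (h : l < l') : Disjoint (dyadicI k l) (dyadicI k l') := by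
  refine Ico_disjoint_Ico.2 ((min_le_left _ _).trans (le_trans ?_ (le_max_right _ _)))
  gcongr
  exact_mod_cast h

lemma disjoint_dI_of_fst_eq {q r : ℤ × ℤ} (h : q.1 = r.1) (hne : q ≠ r) :
    Disjoint (dI q) (dI r) := by
  obtain ⟨k, l⟩ := q
  obtain ⟨k', l'⟩ := r
  obtain rfl : k = k' := h
  have hl : l ≠ l' := fun h' => hne (by rw [h'])
  rcases hl.lt_or_gt with hl | hl
  · exact disjoint_dyadicI hl
  · exact (disjoint_dyadicI hl).symm

lemma eq_of_fst_eq_of_dI_subset {q r : ℤ × ℤ} (h : q.1 = r.1) (hs : dI q ⊆ dI r) : q = r := by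
  by_contra hne
  obtain ⟨x, hx⟩ := dI_nonempty q
  exact disjoint_left.1 (disjoint_dI_of_fst_eq h hne) hx (hs hx)

lemma dI_leftCh_union_rightCh (p : ℤ × ℤ) : dI (leftCh p) ∪ dI (rightCh p) = dI p := by
  obtain ⟨k, l⟩ := p
  have h2 : (2 : ℝ) ^ (-k) = 2 * 2 ^ (-(k + 1)) := by
    rw [neg_add, zpow_add₀ two_ne_zero, zpow_neg_one]; ring
  have hpos : (0 : ℝ) < 2 ^ (-(k + 1)) := zpow_pos two_pos _
  simp only [dI, dyadicI, leftCh, rightCh]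
  push_cast
  rw [Ico_union_Ico_eq_Ico (by nlinarith) (by nlinarith), h2]
  congr 1 <;> ring

lemma disjoint_dI_leftCh_rightCh (p : ℤ × ℤ) : Disjoint (dI (leftCh p)) (dI (rightCh p)) :=
  disjoint_dyadicI (lt_add_one _)

lemma dI_leftCh_subset (p : ℤ × ℤ) : dI (leftCh p) ⊆ dI p :=
  dI_leftCh_union_rightCh p ▸ subset_union_left

lemma dI_rightCh_subset (p : ℤ × ℤ) : dI (rightCh p) ⊆ dI p :=
  dI_leftCh_union_rightCh p ▸ subset_union_right

lemma par_leftCh (p : ℤ × ℤ) : par (leftCh p) = p := by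
  simp only [par, leftCh, Int.fdiv_eq_ediv_of_nonneg _ zero_le_two, Prod.ext_iff]
  omega

lemma par_rightCh (p : ℤ × ℤ) : par (rightCh p) = p := by
  simp only [par, rightCh, Int.fdiv_eq_ediv_of_nonneg _ zero_le_two, Prod.ext_iff]
  omega

lemma eq_leftCh_par_or_eq_rightCh_par (q : ℤ × ℤ) : q = leftCh (par q) ∨ q = rightCh (par q) := by
  simp only [par, leftCh, rightCh, Int.fdiv_eq_ediv_of_nonneg _ zero_le_two, Prod.ext_iff]
  omega

lemma dI_subset_dI_par (q : ℤ × ℤ) : dI q ⊆ dI (par q) := by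
  rcases eq_leftCh_par_or_eq_rightCh_par q with h | h
  · nth_rw 1 [h]; exact dI_leftCh_subset _
  · nth_rw 1 [h]; exact dI_rightCh_subset _

lemma fst_anc (t : ℕ) (q : ℤ × ℤ) : (anc t q).1 = q.1 - t := by
  induction t with
  | zero => simp [anc]
  | succ t ih =>
    simp only [anc, Function.iterate_succ_apply'] at ih ⊢
    simp only [par, ih]
    push_cast
    ring

lemma dI_subset_dI_anc (t : ℕ) (q : ℤ × ℤ) : dI q ⊆ dI (anc t q) := by
  induction t with
  | zero => exact subset_rfl
  | succ t ih =>
    refine ih.trans ?_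
    simp only [anc, Function.iterate_succ_apply']
    exact dI_subset_dI_par _

lemma dI_subset_or_disjoint_of_fst_le {p q : ℤ × ℤ} (h : p.1 ≤ q.1) :
    dI q ⊆ dI p ∨ Disjoint (dI q) (dI p) := by
  have hfst : (anc (q.1 - p.1).toNat q).1 = p.1 := by rw [fst_anc]; omega
  by_cases hanc : anc (q.1 - p.1).toNat q = p
  · exact .inl (hanc ▸ dI_subset_dI_anc _ _)
  · exact .inr ((disjoint_dI_of_fst_eq hfst hanc).mono_left (dI_subset_dI_anc _ _))

lemma dI_par_subset_of_fst_lt {q r : ℤ × ℤ} (h : r.1 < q.1) (hqr : dI q ⊆ dI r) :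
    dI (par q) ⊆ dI r := by
  refine (dI_subset_or_disjoint_of_fst_le (by simp only [par]; omega)).resolve_right fun hd => ?_
  obtain ⟨x, hx⟩ := dI_nonempty q
  exact disjoint_left.1 hd (dI_subset_dI_par q hx) (hqr hx)

lemma dI_subset_leftCh_or_rightCh {p q : ℤ × ℤ} (h : p.1 < q.1) (hq : dI q ⊆ dI p) :
    dI q ⊆ dI (leftCh p) ∨ dI q ⊆ dI (rightCh p) := by
  refine (dI_subset_or_disjoint_of_fst_le (p := leftCh p) (by simp only [leftCh]; omega)).imp_right
    fun hL x hx => ?_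
  have hx' := hq hx
  rw [← dI_leftCh_union_rightCh] at hx'
  exact hx'.resolve_left (disjoint_left.1 hL hx)

def haarCoef (μ : Measure ℝ) (p : ℤ × ℤ) : ℝ :=
  √(μ.real (dI (leftCh p)) * μ.real (dI (rightCh p)) / μ.real (dI p))

section Haar

variable {μ : Measure ℝ}

lemma measureReal_dI_pos (hμ : posFin μ) (q : ℤ × ℤ) : 0 < μ.real (dI q) :=
  ENNReal.toReal_pos (hμ q).1.ne' (hμ q).2.ne

lemma measureReal_dI_eq_add (hμ : posFin μ) (p : ℤ × ℤ) :
    μ.real (dI p) = μ.real (dI (leftCh p)) + μ.real (dI (rightCh p)) := by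
  nth_rw 1 [← dI_leftCh_union_rightCh p]
  exact measureReal_union (disjoint_dI_leftCh_rightCh p) (measurableSet_dI _) (hμ _).2.ne
    (hμ _).2.ne

lemma mval_eq_min_measureReal (p : ℤ × ℤ) :
    mval μ p = min (μ.real (dI (leftCh p))) (μ.real (dI (rightCh p))) := rfl

lemma mval_pos (hμ : posFin μ) (p : ℤ × ℤ) : 0 < mval μ p :=
  lt_min (measureReal_dI_pos hμ _) (measureReal_dI_pos hμ _)

lemma avg_eq_of_eqOn {f : ℝ → ℝ} {T : Set ℝ} {v : ℝ} (hT : MeasurableSet T) (hT₀ : μ T ≠ 0)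
    (hT_top : μ T ≠ ⊤) (h : EqOn f (fun _ => v) T) : avg μ f T = v := by
  rw [avg, setIntegral_congr_fun hT h, setIntegral_const, smul_eq_mul, measureReal_def,
    mul_div_cancel_left₀ _ (ENNReal.toReal_pos hT₀ hT_top).ne']

lemma haarCoef_sq (p : ℤ × ℤ) :
    haarCoef μ p ^ 2 = μ.real (dI (leftCh p)) * μ.real (dI (rightCh p)) / μ.real (dI p) :=
  Real.sq_sqrt (by positivity)

variable {p : ℤ × ℤ} {x : ℝ}

lemma haar_of_mem_leftCh (hx : x ∈ dI (leftCh p)) :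
    haar μ p x = haarCoef μ p / μ.real (dI (leftCh p)) := by
  simp [haar, haarCoef, hx, disjoint_left.1 (disjoint_dI_leftCh_rightCh p) hx, div_eq_mul_inv,
    measureReal_def]

lemma haar_of_mem_rightCh (hx : x ∈ dI (rightCh p)) :
    haar μ p x = -(haarCoef μ p / μ.real (dI (rightCh p))) := by
  simp [haar, haarCoef, hx, disjoint_right.1 (disjoint_dI_leftCh_rightCh p) hx, div_eq_mul_inv,
    measureReal_def]

lemma haar_of_notMem (hx : x ∉ dI p) : haar μ p x = 0 := by
  have hL : x ∉ dI (leftCh p) := fun h => hx (dI_leftCh_subset p h)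
  have hR : x ∉ dI (rightCh p) := fun h => hx (dI_rightCh_subset p h)
  simp [haar, hL, hR]

lemma setIntegral_comp_haar_of_subset (hμ : posFin μ) {F : ℝ → ℝ} (hF : F 0 = 0) {S : Set ℝ}
    (hS : MeasurableSet S) (hpS : dI p ⊆ S) :
    ∫ x in S, F (haar μ p x) ∂μ =
      μ.real (dI (leftCh p)) * F (haarCoef μ p / μ.real (dI (leftCh p))) +
        μ.real (dI (rightCh p)) * F (-(haarCoef μ p / μ.real (dI (rightCh p)))) := by
  have hL : EqOn (fun x => F (haar μ p x)) (fun _ => F (haarCoef μ p / μ.real (dI (leftCh p))))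
      (dI (leftCh p)) := fun x hx => by simp only [haar_of_mem_leftCh hx]
  have hR : EqOn (fun x => F (haar μ p x))
      (fun _ => F (-(haarCoef μ p / μ.real (dI (rightCh p))))) (dI (rightCh p)) :=
    fun x hx => by simp only [haar_of_mem_rightCh hx]
  rw [setIntegral_eq_of_subset_of_forall_sdiff_eq_zero hS hpS
      fun x hx => by simp only [haar_of_notMem hx.2, hF],
    ← dI_leftCh_union_rightCh p,
    setIntegral_union (disjoint_dI_leftCh_rightCh p) (measurableSet_dI _)
      ((integrableOn_const (hμ _).2.ne).congr_fun hL.symm (measurableSet_dI _))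
      ((integrableOn_const (hμ _).2.ne).congr_fun hR.symm (measurableSet_dI _)),
    setIntegral_congr_fun (measurableSet_dI _) hL, setIntegral_congr_fun (measurableSet_dI _) hR,
    setIntegral_const, setIntegral_const, smul_eq_mul, smul_eq_mul]

lemma avg_haar_eq_zero_of_subset (hμ : posFin μ) {T : Set ℝ} (hT : MeasurableSet T)
    (hpT : dI p ⊆ T) : avg μ (haar μ p) T = 0 := by
  have ha := measureReal_dI_pos hμ (leftCh p)
  have hb := measureReal_dI_pos hμ (rightCh p)
  have h := setIntegral_comp_haar_of_subset hμ (F := id) rfl hT hpT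
  simp only [id] at h
  rw [avg, h, mul_div_cancel₀ _ ha.ne', mul_neg, mul_div_cancel₀ _ hb.ne', add_neg_cancel, zero_div]

lemma avg_haar_eq_zero_of_disjoint {T : Set ℝ} (hT : Disjoint T (dI p)) :
    avg μ (haar μ p) T = 0 := by
  rw [avg, setIntegral_eq_zero_of_forall_eq_zero fun x hx => haar_of_notMem (disjoint_left.1 hT hx),
    zero_div]

lemma setIntegral_haar_sq_of_subset (hμ : posFin μ) {S : Set ℝ} (hS : MeasurableSet S)
    (hpS : dI p ⊆ S) : ∫ x in S, haar μ p x ^ 2 ∂μ = 1 := by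
  have ha := measureReal_dI_pos hμ (leftCh p)
  have hb := measureReal_dI_pos hμ (rightCh p)
  rw [setIntegral_comp_haar_of_subset hμ (F := (· ^ 2)) (zero_pow two_ne_zero) hS hpS, neg_sq,
    div_pow, div_pow, haarCoef_sq, measureReal_dI_eq_add hμ p]
  field_simp
  ring

lemma setIntegral_haar_sq_leftCh (hμ : posFin μ) (p : ℤ × ℤ) :
    ∫ x in dI (leftCh p), haar μ p x ^ 2 ∂μ = μ.real (dI (rightCh p)) / μ.real (dI p) := by
  have ha := measureReal_dI_pos hμ (leftCh p)
  rw [setIntegral_congr_fun (measurableSet_dI _)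
      (g := fun _ => (haarCoef μ p / μ.real (dI (leftCh p))) ^ 2)
      fun x hx => by simp only [haar_of_mem_leftCh hx],
    setIntegral_const, smul_eq_mul, div_pow, haarCoef_sq]
  field_simp

lemma setIntegral_haar_sq_rightCh (hμ : posFin μ) (p : ℤ × ℤ) :
    ∫ x in dI (rightCh p), haar μ p x ^ 2 ∂μ = μ.real (dI (leftCh p)) / μ.real (dI p) := by
  have hb := measureReal_dI_pos hμ (rightCh p)
  rw [setIntegral_congr_fun (measurableSet_dI _)
      (g := fun _ => (haarCoef μ p / μ.real (dI (rightCh p))) ^ 2)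
      fun x hx => by simp only [haar_of_mem_rightCh hx, neg_sq],
    setIntegral_const, smul_eq_mul, div_pow, haarCoef_sq]
  field_simp

end Haar

lemma rpow_mul_sqrt_div_le_rpow {m a s t e : ℝ} (hm : 0 < m) (hma : m ≤ a) (hs : 0 ≤ s)
    (hst : s ≤ t) (he : e ≤ 0) : a ^ e * √(s / t) ≤ m ^ e :=
  calc a ^ e * √(s / t) ≤ a ^ e * 1 :=
        mul_le_mul_of_nonneg_left (Real.sqrt_le_one.2 (div_le_one_of_le₀ hst (hs.trans hst)))
          (Real.rpow_nonneg (hm.le.trans hma) _)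
    _ ≤ m ^ e := by rw [mul_one]; exact Real.rpow_le_rpow_of_nonpos hm hma he

lemma inv_sqrt_two_mul_rpow_le {a b e : ℝ} (ha : 0 < a) (hab : a ≤ b) :
    (√2)⁻¹ * a ^ e ≤ a ^ e * √(b / (a + b)) := by
  rw [mul_comm, ← Real.sqrt_inv]
  gcongr
  rw [le_div_iff₀ (by linarith)]
  linarith

def lipTerm (μ : Measure ℝ) (α : ℝ) (f : ℝ → ℝ) (q : ℤ × ℤ) : ℝ :=
  μ.real (dI q) ^ (-(1/2 : ℝ) - α) * √(∫ x in dI q, (f x - avg μ f (dI (par q))) ^ 2 ∂μ)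

section LipTerm

variable {μ : Measure ℝ} {α : ℝ} {f : ℝ → ℝ} {p q : ℤ × ℤ}

lemma lipNorm_eq_iSup_lipTerm : lipNorm μ α f = ⨆ q, ENNReal.ofReal (lipTerm μ α f q) := rfl

lemma lipTerm_eq_zero_of_forall_eq_avg (h : ∀ x ∈ dI q, f x = avg μ f (dI (par q))) :
    lipTerm μ α f q = 0 := by
  have h0 : ∀ x ∈ dI q, (f x - avg μ f (dI (par q))) ^ 2 = 0 := fun x hx => by simp [h x hx]
  rw [lipTerm, setIntegral_eq_zero_of_forall_eq_zero h0, Real.sqrt_zero, mul_zero]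

lemma lipTerm_eq_zero_of_eqOn_par (hμ : posFin μ) {v : ℝ} (h : EqOn f (fun _ => v) (dI (par q))) :
    lipTerm μ α f q = 0 :=
  lipTerm_eq_zero_of_forall_eq_avg fun x hx => by
    rw [avg_eq_of_eqOn (measurableSet_dI _) (hμ _).1.ne' (hμ _).2.ne h, h (dI_subset_dI_par q hx)]

lemma lipTerm_of_avg_eq_zero (h : avg μ f (dI (par q)) = 0) :
    lipTerm μ α f q = μ.real (dI q) ^ (-(1/2 : ℝ) - α) * √(∫ x in dI q, f x ^ 2 ∂μ) := by
  simp only [lipTerm, h, sub_zero]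

lemma lipTerm_haar_of_subset (hμ : posFin μ) (h : dI p ⊆ dI q) :
    lipTerm μ α (haar μ p) q = μ.real (dI q) ^ (-(1/2 : ℝ) - α) := by
  rw [lipTerm_of_avg_eq_zero
      (avg_haar_eq_zero_of_subset hμ (measurableSet_dI _) (h.trans (dI_subset_dI_par q))),
    setIntegral_haar_sq_of_subset hμ (measurableSet_dI _) h, Real.sqrt_one, mul_one]

lemma lipTerm_haar_of_disjoint (hμ : posFin μ) (h : Disjoint (dI q) (dI p)) :
    lipTerm μ α (haar μ p) q = 0 := by
  have havg : avg μ (haar μ p) (dI (par q)) = 0 := by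
    rcases le_total (par q).1 p.1 with hle | hle
    · rcases dI_subset_or_disjoint_of_fst_le hle with hs | hd
      · exact avg_haar_eq_zero_of_subset hμ (measurableSet_dI _) hs
      · exact avg_haar_eq_zero_of_disjoint hd.symm
    · rcases dI_subset_or_disjoint_of_fst_le hle with hs | hd
      · obtain ⟨x, hx⟩ := dI_nonempty q
        exact absurd (hs (dI_subset_dI_par q hx)) (disjoint_left.1 h hx)
      · exact avg_haar_eq_zero_of_disjoint hd
  exact lipTerm_eq_zero_of_forall_eq_avg fun x hx => by
    rw [havg, haar_of_notMem (disjoint_left.1 h hx)]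

lemma lipTerm_haar_leftCh (hμ : posFin μ) (p : ℤ × ℤ) :
    lipTerm μ α (haar μ p) (leftCh p) =
      μ.real (dI (leftCh p)) ^ (-(1/2 : ℝ) - α) * √(μ.real (dI (rightCh p)) / μ.real (dI p)) := by
  rw [lipTerm_of_avg_eq_zero (by
      rw [par_leftCh]; exact avg_haar_eq_zero_of_subset hμ (measurableSet_dI p) subset_rfl),
    setIntegral_haar_sq_leftCh hμ]

lemma lipTerm_haar_rightCh (hμ : posFin μ) (p : ℤ × ℤ) :
    lipTerm μ α (haar μ p) (rightCh p) =
      μ.real (dI (rightCh p)) ^ (-(1/2 : ℝ) - α) * √(μ.real (dI (leftCh p)) / μ.real (dI p)) := by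
  rw [lipTerm_of_avg_eq_zero (by
      rw [par_rightCh]; exact avg_haar_eq_zero_of_subset hμ (measurableSet_dI p) subset_rfl),
    setIntegral_haar_sq_rightCh hμ]

lemma exists_lipTerm_haar_ge (hμ : posFin μ) (α : ℝ) (p : ℤ × ℤ) :
    ∃ q, (√2)⁻¹ * mval μ p ^ (-(1/2 : ℝ) - α) ≤ lipTerm μ α (haar μ p) q := by
  have ha := measureReal_dI_pos hμ (leftCh p)
  have hb := measureReal_dI_pos hμ (rightCh p)
  rcases le_total (μ.real (dI (leftCh p))) (μ.real (dI (rightCh p))) with hab | hba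
  · refine ⟨leftCh p, ?_⟩
    rw [lipTerm_haar_leftCh hμ, mval_eq_min_measureReal, min_eq_left hab,
      measureReal_dI_eq_add hμ p]
    exact inv_sqrt_two_mul_rpow_le ha hab
  · refine ⟨rightCh p, ?_⟩
    rw [lipTerm_haar_rightCh hμ, mval_eq_min_measureReal, min_eq_right hba,
      measureReal_dI_eq_add hμ p, add_comm]
    exact inv_sqrt_two_mul_rpow_le hb hba

end LipTerm

section UpperBound

variable {μ : Measure ℝ} {α : ℝ} {p q c : ℤ × ℤ}

lemma haar_eqOn_child (hc : c = leftCh p ∨ c = rightCh p) :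
    ∃ v, EqOn (haar μ p) (fun _ => v) (dI c) := by
  rcases hc with rfl | rfl
  · exact ⟨_, fun x hx => haar_of_mem_leftCh hx⟩
  · exact ⟨_, fun x hx => haar_of_mem_rightCh hx⟩

lemma lipTerm_haar_child_le (hμ : posFin μ) (hα : 0 ≤ α) (hc : c = leftCh p ∨ c = rightCh p) :
    lipTerm μ α (haar μ p) c ≤ mval μ p ^ (-(1/2 : ℝ) - α) := by
  have hm := mval_pos hμ p
  have he : -(1/2 : ℝ) - α ≤ 0 := by linarith
  rcases hc with rfl | rfl
  · rw [lipTerm_haar_leftCh hμ]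
    exact rpow_mul_sqrt_div_le_rpow hm (min_le_left _ _) measureReal_nonneg
      (measureReal_mono (dI_rightCh_subset p) (hμ p).2.ne) he
  · rw [lipTerm_haar_rightCh hμ]
    exact rpow_mul_sqrt_div_le_rpow hm (min_le_right _ _) measureReal_nonneg
      (measureReal_mono (dI_leftCh_subset p) (hμ p).2.ne) he

lemma lipTerm_haar_le_of_subset_child (hμ : posFin μ) (hα : 0 ≤ α)
    (hc : c = leftCh p ∨ c = rightCh p) (hcq : c.1 ≤ q.1) (hq : dI q ⊆ dI c) :
    lipTerm μ α (haar μ p) q ≤ mval μ p ^ (-(1/2 : ℝ) - α) := by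
  rcases hcq.eq_or_lt with heq | hlt
  · rw [eq_of_fst_eq_of_dI_subset heq.symm hq]
    exact lipTerm_haar_child_le hμ hα hc
  · obtain ⟨v, hv⟩ := haar_eqOn_child hc
    rw [lipTerm_eq_zero_of_eqOn_par hμ (hv.mono (dI_par_subset_of_fst_lt hlt hq))]
    exact Real.rpow_nonneg (mval_pos hμ p).le _

lemma lipTerm_haar_le (hμ : posFin μ) (hα : 0 ≤ α) (p q : ℤ × ℤ) :
    lipTerm μ α (haar μ p) q ≤ mval μ p ^ (-(1/2 : ℝ) - α) := by
  have hm := mval_pos hμ p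
  have hnonneg : 0 ≤ mval μ p ^ (-(1/2 : ℝ) - α) := Real.rpow_nonneg hm.le _
  rcases le_or_gt q.1 p.1 with hqp | hpq
  · rcases dI_subset_or_disjoint_of_fst_le hqp with hs | hd
    · rw [lipTerm_haar_of_subset hμ hs]
      exact Real.rpow_le_rpow_of_nonpos hm ((min_le_left _ _).trans
        (measureReal_mono ((dI_leftCh_subset p).trans hs) (hμ q).2.ne)) (by linarith)
    · rw [lipTerm_haar_of_disjoint hμ hd.symm]
      exact hnonneg
  · rcases dI_subset_or_disjoint_of_fst_le hpq.le with hs | hd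
    · rcases dI_subset_leftCh_or_rightCh hpq hs with hL | hR
      · exact lipTerm_haar_le_of_subset_child hμ hα (.inl rfl) hpq hL
      · exact lipTerm_haar_le_of_subset_child hμ hα (.inr rfl) hpq hR
    · rw [lipTerm_haar_of_disjoint hμ hd]
      exact hnonneg

end UpperBound

/-- `‖h_I‖_{Λ₂(α)}` is comparable, with absolute constants, to
`m(I)^{-α-1/2}`, where `m(I) = min(μ(I₋), μ(I₊))`. -/
theorem haar_lipschitz_norm_comparable :
    ∃ c : ℝ, 0 < c ∧ ∀ (μ : Measure ℝ), posFin μ → ∀ (α : ℝ), 0 ≤ α → ∀ (p : ℤ × ℤ),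
      ENNReal.ofReal (c⁻¹ * (mval μ p) ^ (-α - 1/2 : ℝ)) ≤ lipNorm μ α (haar μ p) ∧
      lipNorm μ α (haar μ p) ≤ ENNReal.ofReal (c * (mval μ p) ^ (-α - 1/2 : ℝ)) := by
  refine ⟨√2, by positivity, fun μ hμ α hα p => ?_⟩
  rw [show (-α - 1/2 : ℝ) = -(1/2) - α by ring, lipNorm_eq_iSup_lipTerm]
  constructor
  · obtain ⟨q, hq⟩ := exists_lipTerm_haar_ge hμ α p
    exact (ENNReal.ofReal_le_ofReal hq).trans
      (le_iSup (fun q => ENNReal.ofReal (lipTerm μ α (haar μ p) q)) q)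
  · refine iSup_le fun q => ENNReal.ofReal_le_ofReal ?_
    exact (lipTerm_haar_le hμ hα p q).trans
      (le_mul_of_one_le_left (Real.rpow_nonneg (mval_pos hμ p).le _) Real.one_lt_sqrt_two.le)
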